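/- Let C be a finite candidate set and let S be a tournament solution on C that is exclusive monotonic and satisfies exclusive negative monotonicity (ENM). Then S-Approval is monotonic: whenever c is an S-Approval winner of an election E on C and the election E' is obtained from E by improving c, c is an S-Approval winner of E'. -/

import Mathlib

/-! Improving `c` in a single vote can only help `c` against any rival `d`: by exclusive
monotonicity and ENM, either `S r' ⊆ S r` while `c` keeps its approval, or `c` gains an
approval it did not have. Either way the vote adds at least as much to `c`'s score gain as
to `d`'s, and summing over the votes preserves `c`'s maximal score. -/

open scoped Classical

/-- A tournament on `C`: an irreflexive relation such that for all distinct
`a b` exactly one of `r a b`, `r b a` holds. -/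
def IsTournament {C : Type*} (r : C → C → Prop) : Prop :=
  (∀ a : C, ¬ r a a) ∧ ∀ a b : C, a ≠ b → (r a b ↔ ¬ r b a)

/-- The `S`-Approval score of candidate `c` in election `E`: the number of
votes `T` of `E` with `c ∈ S T`. -/
noncomputable def approvalScore {C : Type*} (S : (C → C → Prop) → Set C)
    (E : List (C → C → Prop)) (c : C) : ℕ :=
  (E.map (fun r => if c ∈ S r then 1 else 0)).sum

/-- The `S`-Approval winner set of election `E`: candidates of maximum score. -/
def winners {C : Type*} (S : (C → C → Prop) → Set C)
    (E : List (C → C → Prop)) : Set C :=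
  {c | ∀ d : C, approvalScore S E d ≤ approvalScore S E c}

/-- `r'` is obtained from `r` by improving candidate `c`: the two relations
agree on all pairs of candidates distinct from `c`, and the outneighborhood
of `c` only grows. -/
def ImprovedBy {C : Type*} (r r' : C → C → Prop) (c : C) : Prop :=
  (∀ a b : C, a ≠ c → b ≠ c → (r a b ↔ r' a b)) ∧ ∀ b : C, r c b → r' c b

/-- Exclusive monotonicity of a tournament solution. -/
def ExclusiveMonotonic {C : Type*} (S : (C → C → Prop) → Set C) : Prop :=
  ∀ (r r' : C → C → Prop) (c : C), IsTournament r → IsTournament r' →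
    ImprovedBy r r' c → c ∈ S r → c ∈ S r' ∧ S r' ⊆ S r

/-- Exclusive negative monotonicity (ENM) of a tournament solution. -/
def ENM {C : Type*} (S : (C → C → Prop) → Set C) : Prop :=
  ∀ (r r' : C → C → Prop) (c : C), IsTournament r → IsTournament r' →
    ImprovedBy r r' c → c ∉ S r → ¬ S r' ⊆ S r → c ∈ S r'

theorem List.Forall₂.imp_of_mem {α β : Type*} {R Q : α → β → Prop} {l₁ : List α} {l₂ : List β}
    (H : ∀ a ∈ l₁, ∀ b ∈ l₂, R a b → Q a b) (h : List.Forall₂ R l₁ l₂) :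
    List.Forall₂ Q l₁ l₂ := by
  induction h with
  | nil => exact .nil
  | cons hab _ ih =>
    refine .cons (H _ List.mem_cons_self _ List.mem_cons_self hab) (ih fun a ha b hb => ?_)
    exact H a (List.mem_cons_of_mem _ ha) b (List.mem_cons_of_mem _ hb)

section Approval

variable {C : Type*} {S : (C → C → Prop) → Set C}

noncomputable def approval (S : (C → C → Prop) → Set C) (r : C → C → Prop) (c : C) : ℕ :=
  if c ∈ S r then 1 else 0

@[simp]
theorem approvalScore_nil (c : C) : approvalScore S [] c = 0 := rfl

@[simp]
theorem approvalScore_cons (r : C → C → Prop) (E : List (C → C → Prop)) (c : C) :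
    approvalScore S (r :: E) c = approval S r c + approvalScore S E c := by
  simp [approvalScore, approval]

theorem approvalScore_add_le_of_forall₂ {E E' : List (C → C → Prop)} {c d : C}
    (h : List.Forall₂
      (fun r r' => approval S r c + approval S r' d ≤ approval S r d + approval S r' c) E E') :
    approvalScore S E c + approvalScore S E' d ≤ approvalScore S E d + approvalScore S E' c := by
  induction h with
  | nil => simp
  | cons hvote _ ih =>
    simp only [approvalScore_cons]
    omega

theorem ExclusiveMonotonic.subset_or_mem_of_improvedBy (hEM : ExclusiveMonotonic S)
    (hENM : ENM S) {r r' : C → C → Prop} {c : C} (hr : IsTournament r)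
    (hr' : IsTournament r') (himp : ImprovedBy r r' c) :
    (c ∈ S r → c ∈ S r') ∧ (S r' ⊆ S r ∨ c ∉ S r ∧ c ∈ S r') := by
  refine ⟨fun hc => (hEM r r' c hr hr' himp hc).1, ?_⟩
  by_cases hc : c ∈ S r
  · exact .inl (hEM r r' c hr hr' himp hc).2
  · by_cases hsub : S r' ⊆ S r
    · exact .inl hsub
    · exact .inr ⟨hc, hENM r r' c hr hr' himp hc hsub⟩

theorem ExclusiveMonotonic.approval_add_le_of_improvedBy (hEM : ExclusiveMonotonic S)
    (hENM : ENM S) {r r' : C → C → Prop} {c : C} (hr : IsTournament r)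
    (hr' : IsTournament r') (himp : ImprovedBy r r' c) (d : C) :
    approval S r c + approval S r' d ≤ approval S r d + approval S r' c := by
  obtain ⟨hkeep, hsub | ⟨hc, hc'⟩⟩ := hEM.subset_or_mem_of_improvedBy hENM hr hr' himp <;>
    unfold approval <;> split_ifs <;> simp_all [Set.subset_def]

end Approval

theorem stmt_3_general {C : Type*} (S : (C → C → Prop) → Set C)
    (hEM : ExclusiveMonotonic S) (hENM : ENM S)
    (E E' : List (C → C → Prop)) (c : C)
    (hE : ∀ r ∈ E, IsTournament r) (hE' : ∀ r ∈ E', IsTournament r)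
    (himp : List.Forall₂ (fun r r' => ImprovedBy r r' c) E E')
    (hwin : c ∈ winners S E) :
    c ∈ winners S E' := by
  intro d
  have hexchange :=
    approvalScore_add_le_of_forall₂ (S := S) (c := c) (d := d) <| himp.imp_of_mem
      fun r hr r' hr' h => hEM.approval_add_le_of_improvedBy hENM (hE r hr) (hE' r' hr') h d
  have hmax := hwin d
  omega

/-- if `S` is exclusive monotonic and satisfies ENM, then
`S`-Approval is monotonic. -/
theorem stmt_3 {C : Type*} [Finite C] (S : (C → C → Prop) → Set C)
    (hS : ∀ r : C → C → Prop, IsTournament r → (S r).Nonempty)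
    (hEM : ExclusiveMonotonic S) (hENM : ENM S)
    (E E' : List (C → C → Prop)) (c : C)
    (hE : ∀ r ∈ E, IsTournament r) (hE' : ∀ r ∈ E', IsTournament r)
    (himp : List.Forall₂ (fun r r' => ImprovedBy r r' c) E E')
    (hwin : c ∈ winners S E) :
    c ∈ winners S E' :=
  stmt_3_general S hEM hENM E E' c hE hE' himp hwin
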